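/- arXiv:1011.0876 — 3 statements merged into one kernel-verified Lean document; each statement's English description precedes it below -/
import Mathlib

section
/- For all positive integers a, b, c, d with a ≤ c, a ≤ b, c ≤ d and b ≥ c, setting A = |(a-1)(b-1) - (c-1)(d-1)| and A' = |(a-1)(b-c-1) - (c-1)(d-a-1)|, one has A' ≤ A + a + c. -/
/-- Key inductive estimate: A' ≤ A + a + c. -/
theorem stmt_7 (a b c d : ℤ) (ha : 1 ≤ a) (hac : a ≤ c) (hab : a ≤ b)
    (hcd : c ≤ d) (hbc : c ≤ b) :
    |(a - 1) * (b - c - 1) - (c - 1) * (d - a - 1)| ≤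
      |(a - 1) * (b - 1) - (c - 1) * (d - 1)| + a + c := by
  have h : (a - 1) * (b - c - 1) - (c - 1) * (d - a - 1) =
      ((a - 1) * (b - 1) - (c - 1) * (d - 1)) + (c - a) := by ring
  rw [h]
  have h1 := abs_add_le ((a - 1) * (b - 1) - (c - 1) * (d - 1)) (c - a)
  have h2 : |c - a| = c - a := abs_of_nonneg (by linarith)
  linarith
end

section
/- For positive integers a, b, c, d with a ≤ c, a ≤ b, c ≤ d, b ≥ c, the inequality A' + 2(a + (b-c) + c + (d-a)) + a + c ≤ A + 2(a+b+c+d) holds, where A = |(a-1)(b-1) - (c-1)(d-1)| and A' = |(a-1)(b-c-1) - (c-1)(d-a-1)|. -/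
/-- Closing the induction: A' + 2(a+(b-c)+c+(d-a)) + a + c ≤ A + 2(a+b+c+d). -/
theorem stmt_8 (a b c d : ℤ) (ha : 1 ≤ a) (hac : a ≤ c) (hab : a ≤ b)
    (hcd : c ≤ d) (hbc : c ≤ b) :
    |(a - 1) * (b - c - 1) - (c - 1) * (d - a - 1)|
      + 2 * (a + (b - c) + c + (d - a)) + a + c ≤
    |(a - 1) * (b - 1) - (c - 1) * (d - 1)| + 2 * (a + b + c + d) := by
  have h1 : (a - 1) * (b - c - 1) - (c - 1) * (d - a - 1)
      = ((a - 1) * (b - 1) - (c - 1) * (d - 1)) + (c - a) := by ring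
  have h2 := abs_add_le ((a - 1) * (b - 1) - (c - 1) * (d - 1)) (c - a)
  rw [h1]
  have h3 : |c - a| = c - a := abs_of_nonneg (by linarith)
  linarith
end

section
/- Let d_χ : (torus link parameters) be any function on pairs of pairs of positive integers satisfying d(a,b,c,d) ≥ |(-ab+a+b) - (-cd+c+d)| and the triangle inequality d(a,b,e,f) ≤ d(a,b,c,d) + d(c,d,e,f), together with d(c,d,c,ka) ≤ r(c-1) when d = ka + r (0 ≤ r < a), d(c,ka,kc,a) ≤ (k-1)(c-a) for c ≥ a, and d(kc,a,b,a) ≤ |(-kca+kc+a)-(-ab+a+b)|. Then for d = ka+r, d(c,d,b,a) ≤ |(-ab+a+b)-(-cd+c+d)| + 2r(c-1) + 2(k-1)(c-a). -/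
/-- Abstract cobordism-distance estimate.  Given a function D on pairs of
torus-link parameters bounded below by the Euler characteristic difference,
satisfying the triangle inequality and the three cobordism constructions,
the chain T(c,d) → T(c,ka) → T(kc,a) → T(b,a) yields
D(c,d,b,a) ≤ |χ(a,b) - χ(c,d)| + 2r(c-1) + 2(k-1)(c-a). -/
theorem stmt_10 (a b c d k r : ℕ)
    (ha : 1 ≤ a) (hb : 1 ≤ b) (hac : a ≤ c) (hcd : c ≤ d)
    (hk : 1 ≤ k) (hr : r < a) (hdk : d = k * a + r)
    (D : ℕ → ℕ → ℕ → ℕ → ℝ)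
    (hlower : ∀ p q s t : ℕ,
      D p q s t ≥ |(-(p*q) + p + q : ℝ) - (-(s*t) + s + t)|)
    (htri : ∀ p q s t u v : ℕ, D p q u v ≤ D p q s t + D s t u v)
    (hC1 : D c d c (k * a) ≤ (r : ℝ) * (c - 1))
    (hC2 : D c (k * a) (k * c) a ≤ ((k : ℝ) - 1) * ((c : ℝ) - a))
    (hC3 : D (k * c) a b a ≤
      |(-((k*c)*a) + k*c + a : ℝ) - (-(a*b) + a + b)|) :
    D c d b a ≤ |(-(a*b) + a + b : ℝ) - (-(c*d) + c + d)|
      + 2 * r * ((c : ℝ) - 1) + 2 * ((k : ℝ) - 1) * ((c : ℝ) - a) := by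
  have h1 := htri c d c (k * a) b a
  have h2 := htri c (k * a) (k * c) a b a
  have ha1 : (1 : ℝ) ≤ a := by exact_mod_cast ha
  have hac' : (a : ℝ) ≤ c := by exact_mod_cast hac
  have hk1 : (1 : ℝ) ≤ k := by exact_mod_cast hk
  have hE : (0 : ℝ) ≤ ((k : ℝ) - 1) * ((c : ℝ) - a) + r * ((c : ℝ) - 1) := by
    have : (0:ℝ) ≤ (r:ℝ) := Nat.cast_nonneg r
    nlinarith
  have hEq : (-((k*c)*a) + k*c + a : ℝ) - (-(a*b) + a + b)
      = ((-(c*d) + c + d : ℝ) - (-(a*b) + a + b))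
        + (((k : ℝ) - 1) * ((c : ℝ) - a) + r * ((c : ℝ) - 1)) := by
    subst hdk; push_cast; ring
  have key : |(-((k*c)*a) + k*c + a : ℝ) - (-(a*b) + a + b)|
      ≤ |(-(a*b) + a + b : ℝ) - (-(c*d) + c + d)|
        + (((k : ℝ) - 1) * ((c : ℝ) - a) + r * ((c : ℝ) - 1)) := by
    rw [hEq]
    calc |((-(c*d) + c + d : ℝ) - (-(a*b) + a + b))
          + (((k : ℝ) - 1) * ((c : ℝ) - a) + r * ((c : ℝ) - 1))|
        ≤ |(-(c*d) + c + d : ℝ) - (-(a*b) + a + b)|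
          + |(((k : ℝ) - 1) * ((c : ℝ) - a) + r * ((c : ℝ) - 1))| := abs_add_le _ _
      _ = |(-(a*b) + a + b : ℝ) - (-(c*d) + c + d)|
          + (((k : ℝ) - 1) * ((c : ℝ) - a) + r * ((c : ℝ) - 1)) := by
          rw [abs_sub_comm, abs_of_nonneg hE]
  linarith
end
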